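/- For every nonmeager set B ⊆ ℝ having the Baire property, there exists a set F ⊆ B such that (i) F is nonmeager, (ii) every set with the Baire property contained in B \ F is meager (i.e., F is a full subset of B), and (iii) no two distinct points of F are at a rational distance from one another, so that F admits no subset of two or more points with pairwise rational mutual distances; in particular, the rational-distance Steinhaus covering theorem fails for F. -/
import Mathlib

open Set Cardinal Filter

namespace RatDistAux

/-- Codes for targets: an open set code and a sequence of open set codes. -/
abbrev Code := Set (ℚ × ℚ) × (ℕ → Set (ℚ × ℚ))

/-- Decode a set of rational pairs into an open set. -/
def O (s : Set (ℚ × ℚ)) : Set ℝ := ⋃ p ∈ s, Set.Ioo (p.1 : ℝ) (p.2 : ℝ)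

lemma isOpen_O (s : Set (ℚ × ℚ)) : IsOpen (O s) :=
  isOpen_biUnion fun _ _ => isOpen_Ioo

/-- Encode an open set of reals as a set of rational pairs. -/
def enc (U : Set ℝ) : Set (ℚ × ℚ) := {p | Set.Ioo (p.1 : ℝ) (p.2 : ℝ) ⊆ U}

lemma O_enc {U : Set ℝ} (hU : IsOpen U) : O (enc U) = U := by
  apply subset_antisymm
  · intro x hx
    rcases mem_iUnion₂.mp hx with ⟨p, hp, hxp⟩
    exact hp hxp
  · intro x hx
    obtain ⟨ε, hε, hball⟩ := Metric.isOpen_iff.mp hU x hx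
    rw [Real.ball_eq_Ioo] at hball
    obtain ⟨q1, hq1, hq1'⟩ := exists_rat_btwn (show x - ε < x by linarith)
    obtain ⟨q2, hq2, hq2'⟩ := exists_rat_btwn (show x < x + ε by linarith)
    refine mem_iUnion₂.mpr ⟨(q1, q2), ?_, ⟨hq1', hq2⟩⟩
    intro y hy
    exact hball ⟨lt_trans hq1 hy.1, lt_trans hy.2 hq2'⟩

/-- The target set of a code. -/
def Tset (c : Code) : Set ℝ := O c.1 ∩ ⋂ n, O (c.2 n)

/-- A code is good (relative to `B`) if its first part is nonempty, its second parts are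
dense, and its target is contained in `B`. -/
def Good (B : Set ℝ) (c : Code) : Prop :=
  (O c.1).Nonempty ∧ (∀ n, Dense (O (c.2 n))) ∧ Tset c ⊆ B

lemma not_isMeagre_of_isOpen {U : Set ℝ} (hU : IsOpen U) (hne : U.Nonempty) :
    ¬ IsMeagre U := by
  intro h
  have hd : Dense (Uᶜ) := dense_of_mem_residual h
  obtain ⟨x, hx1, hx2⟩ := hd.inter_open_nonempty U hU hne
  exact hx2 hx1

lemma isMeagre_union {s t : Set ℝ} (hs : IsMeagre s) (ht : IsMeagre t) :
    IsMeagre (s ∪ t) := by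
  rw [IsMeagre, compl_union]
  exact Filter.inter_mem hs ht

lemma IsNowhereDense.isMeagre' {s : Set ℝ} (hs : IsNowhereDense s) : IsMeagre s := by
  rw [isMeagre_iff_countable_union_isNowhereDense]
  exact ⟨{s}, by simpa using hs, countable_singleton s, by simp⟩

lemma countable_isMeagre {s : Set ℝ} (hs : s.Countable) : IsMeagre s := by
  rw [isMeagre_iff_countable_union_isNowhereDense]
  refine ⟨(fun x => ({x} : Set ℝ)) '' s, ?_, hs.image _, ?_⟩
  · rintro t ⟨x, -, rfl⟩
    rw [IsNowhereDense, closure_singleton]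
    exact interior_singleton x
  · intro x hx
    exact ⟨{x}, ⟨x, hx, rfl⟩, rfl⟩

lemma continuum_le_Tset (c : Code) (h1 : (O c.1).Nonempty)
    (h2 : ∀ n, Dense (O (c.2 n))) : 𝔠 ≤ #(Tset c) := by
  -- The target is Borel.
  have hmeas : MeasurableSet (Tset c) :=
    (isOpen_O c.1).measurableSet.inter
      (MeasurableSet.iInter fun n => (isOpen_O (c.2 n)).measurableSet)
  -- The target is not countable, since otherwise `O c.1` would be meagre.
  have hunc : ¬ (Tset c).Countable := by
    intro hcnt
    have hsub : O c.1 ⊆ Tset c ∪ ⋃ n, (O (c.2 n))ᶜ := by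
      intro x hx
      by_cases h : x ∈ ⋂ n, O (c.2 n)
      · exact Or.inl ⟨hx, h⟩
      · rw [mem_iInter] at h
        push_neg at h
        obtain ⟨n, hn⟩ := h
        exact Or.inr (mem_iUnion.mpr ⟨n, hn⟩)
    have hm : IsMeagre (Tset c ∪ ⋃ n, (O (c.2 n))ᶜ) := by
      refine isMeagre_union (countable_isMeagre hcnt) (isMeagre_iUnion fun n => ?_)
      refine IsNowhereDense.isMeagre' ?_
      rw [(isOpen_O (c.2 n)).isClosed_compl.isNowhereDense_iff,
        interior_eq_empty_iff_dense_compl, compl_compl]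
      exact h2 n
    exact not_isMeagre_of_isOpen (isOpen_O c.1) h1 (hm.mono hsub)
  -- A Borel uncountable set contains a copy of the Cantor space.
  obtain ⟨t', t'le, t'polish, hclosed, -⟩ := hmeas.isClopenable
  obtain ⟨f, hfsub, -, hfinj⟩ :=
    @IsClosed.exists_nat_bool_injection_of_not_countable ℝ t' t'polish _ hclosed hunc
  have : 𝔠 ≤ #(Tset c) := by
    have := Cardinal.mk_le_of_injective
      (f := fun y : ℕ → Bool => (⟨f y, hfsub (Set.mem_range_self y)⟩ : Tset c))
      (fun a b hab => hfinj (congrArg Subtype.val hab))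
    rwa [Cardinal.mk_arrow, Cardinal.mk_bool, Cardinal.mk_nat, Cardinal.lift_id,
      Cardinal.lift_id', Cardinal.two_power_aleph0] at this
  exact this

/-- The index type: a well-ordered type of order type `𝔠.ord`, so that every initial
segment has size `< 𝔠`. -/
abbrev Idx : Type := (Cardinal.continuum.ord).ToType

lemma mk_Idx : #Idx = 𝔠 := Cardinal.mk_ord_toType 𝔠

lemma mk_Code : #Code = 𝔠 := by
  have h1 : #(Set (ℚ × ℚ)) = 𝔠 := by
    rw [Cardinal.mk_set, Cardinal.mk_denumerable, Cardinal.two_power_aleph0]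
  have h2 : #(ℕ → Set (ℚ × ℚ)) = 𝔠 := by
    rw [Cardinal.mk_arrow, h1, Cardinal.mk_nat, Cardinal.lift_id, Cardinal.lift_id,
      Cardinal.continuum_power_aleph0]
  rw [Cardinal.mk_prod, h1, h2, Cardinal.lift_id,
    Cardinal.mul_eq_self Cardinal.aleph0_le_continuum]

/-- A surjective enumeration of codes by the index type. -/
noncomputable def codeEquiv : Idx ≃ Code :=
  Classical.choice (Cardinal.eq.mp (mk_Idx.trans mk_Code.symm))

/-- A surjective enumeration of codes by the index type. -/
noncomputable def codeOf : Idx → Code := codeEquiv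

lemma codeOf_surjective : Function.Surjective codeOf :=
  codeEquiv.surjective

/-- The transfinite selection: at each index, choose (if possible) a point of the target of
its code avoiding all rational translates of previously chosen points. -/
noncomputable def pick (B : Set ℝ) : Idx → ℝ := fun x =>
  Classical.epsilon fun z =>
    z ∈ Tset (codeOf x) ∧ ∀ y : Idx, y < x → ∀ q : ℚ, z ≠ pick B y + (q : ℝ)
termination_by x => x
decreasing_by assumption

lemma pick_spec (B : Set ℝ) (x : Idx) (hx : Good B (codeOf x)) :
    pick B x ∈ Tset (codeOf x) ∧
      ∀ y : Idx, y < x → ∀ q : ℚ, pick B x ≠ pick B y + (q : ℝ) := by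
  have hex : ∃ z, z ∈ Tset (codeOf x) ∧
      ∀ y : Idx, y < x → ∀ q : ℚ, z ≠ pick B y + (q : ℝ) := by
    by_contra h
    push_neg at h
    have hsub : Tset (codeOf x) ⊆
        Set.range (fun p : (Set.Iio x) × ℚ => pick B p.1.1 + (p.2 : ℝ)) := by
      intro z hz
      obtain ⟨y, hy, q, hq⟩ := h z hz
      exact ⟨(⟨y, hy⟩, q), hq.symm⟩
    have hle : #(Tset (codeOf x)) ≤ #((Set.Iio x) × ℚ) :=
      (Cardinal.mk_le_mk_of_subset hsub).trans Cardinal.mk_range_le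
    have hlt : #((Set.Iio x) × ℚ) < 𝔠 := by
      rw [Cardinal.mk_prod, Cardinal.mk_denumerable ℚ, Cardinal.lift_id, Cardinal.lift_aleph0]
      exact Cardinal.mul_lt_of_lt Cardinal.aleph0_le_continuum
        (Cardinal.mk_Iio_ord_toType x) Cardinal.aleph0_lt_continuum
    exact absurd (continuum_le_Tset (codeOf x) hx.1 hx.2.1) (by
      intro hge
      exact (lt_irrefl _ (lt_of_le_of_lt (hge.trans hle) hlt)))
  rw [pick]
  exact Classical.epsilon_spec hex

end RatDistAux

/-- `A` has the Baire property: it differs from an open set by a meager set. -/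
def HasBaireProp (A : Set ℝ) : Prop :=
  ∃ U : Set ℝ, IsOpen U ∧ IsMeagre (symmDiff A U)

namespace RatDistAux

/-- Any Baire-property nonmeager set contains a good target. -/
lemma exists_good_code {S : Set ℝ} (hBP : HasBaireProp S) (hnm : ¬ IsMeagre S) :
    ∃ c : Code, (O c.1).Nonempty ∧ (∀ n, Dense (O (c.2 n))) ∧ Tset c ⊆ S := by
  obtain ⟨U, hUopen, hUmeag⟩ := hBP
  have hUne : U.Nonempty := by
    rcases Set.eq_empty_or_nonempty U with rfl | h
    · exact absurd (by rwa [show (∅ : Set ℝ) = ⊥ from rfl, symmDiff_bot] at hUmeag) hnm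
    · exact h
  -- The complement of the symmetric difference is residual.
  have hres : (symmDiff S U)ᶜ ∈ residual ℝ := hUmeag
  obtain ⟨S0, hS0open, hS0dense, hS0cnt, hS0sub⟩ := mem_residual_iff.mp hres
  -- Index a countable family of dense open sets by `ℕ`.
  obtain ⟨W, hW⟩ := Set.Countable.exists_eq_range
    ((hS0cnt.insert Set.univ)) (Set.insert_nonempty _ _)
  have hWopen : ∀ n, IsOpen (W n) := by
    intro n
    have : W n ∈ insert Set.univ S0 := hW ▸ Set.mem_range_self n
    rcases this with h | h
    · rw [h]; exact isOpen_univ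
    · exact hS0open _ h
  have hWdense : ∀ n, Dense (W n) := by
    intro n
    have : W n ∈ insert Set.univ S0 := hW ▸ Set.mem_range_self n
    rcases this with h | h
    · rw [h]; exact dense_univ
    · exact hS0dense _ h
  refine ⟨(enc U, fun n => enc (W n)), ?_, ?_, ?_⟩
  · rw [O_enc hUopen]; exact hUne
  · intro n; rw [O_enc (hWopen n)]; exact hWdense n
  · intro z hz
    obtain ⟨hz1, hz2⟩ := hz
    rw [O_enc hUopen] at hz1
    have hzG : z ∈ (symmDiff S U)ᶜ := by
      apply hS0sub
      intro t ht
      have : t ∈ insert Set.univ S0 := Set.mem_insert_of_mem _ ht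
      rw [hW] at this
      obtain ⟨n, rfl⟩ := this
      have := Set.mem_iInter.mp hz2 n
      rwa [O_enc (hWopen n)] at this
    -- `z ∈ U` and `z ∉ S Δ U` imply `z ∈ S`.
    rw [Set.mem_compl_iff, Set.symmDiff_def] at hzG
    by_contra hzS
    exact hzG (Or.inr ⟨hz1, hzS⟩)

end RatDistAux

open RatDistAux
/-- Every nonmeager Baire-property set `B` has a full subset `F` (nonmeager, and every
Baire-property subset of `B \ F` is meager) in which no two distinct points are at
rational distance; hence the rational-distance Steinhaus covering theorem fails for `F`. -/
theorem exists_full_subset_no_rational_distances_category (B : Set ℝ)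
    (hBP : HasBaireProp B) (hnm : ¬ IsMeagre B) :
    ∃ F : Set ℝ, F ⊆ B ∧ ¬ IsMeagre F ∧
      (∀ S : Set ℝ, S ⊆ B \ F → HasBaireProp S → IsMeagre S) ∧
      (∀ x ∈ F, ∀ y ∈ F, x ≠ y → ¬ ∃ q : ℚ, |x - y| = (q : ℝ)) := by
  classical
  set F : Set ℝ := pick B '' {x : Idx | Good B (codeOf x)} with hF
  -- (i) F ⊆ B
  have hFsub : F ⊆ B := by
    rintro - ⟨x, hx, rfl⟩
    exact hx.2.2 (pick_spec B x hx).1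
  -- (iii') no rational distances
  have hdist : ∀ x ∈ F, ∀ y ∈ F, x ≠ y → ¬ ∃ q : ℚ, |x - y| = (q : ℝ) := by
    rintro - ⟨a, ha, rfl⟩ - ⟨b, hb, rfl⟩ hne ⟨q, hq⟩
    have key : ∀ a b : Idx, Good B (codeOf a) → b < a →
        ∀ r : ℝ, (∃ q : ℚ, (q : ℝ) = r) → pick B a ≠ pick B b + r := by
      rintro a b ha hba r ⟨q', rfl⟩
      exact (pick_spec B a ha).2 b hba q'
    rcases lt_trichotomy a b with h | h | h
    · rcases abs_cases (pick B a - pick B b) with ⟨h1, -⟩ | ⟨h1, -⟩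
      · -- pick a - pick b = q, so pick b = pick a + (-q)
        refine key b a hb h (-q) ⟨-q, by push_cast; ring⟩ ?_
        have : pick B a - pick B b = (q : ℝ) := by rw [← h1, hq]
        linarith
      · refine key b a hb h (q : ℝ) ⟨q, rfl⟩ ?_
        have : -(pick B a - pick B b) = (q : ℝ) := by rw [← h1, hq]
        linarith
    · exact hne (by rw [h])
    · rcases abs_cases (pick B a - pick B b) with ⟨h1, -⟩ | ⟨h1, -⟩
      · refine key a b ha h (q : ℝ) ⟨q, rfl⟩ ?_
        have : pick B a - pick B b = (q : ℝ) := by rw [← h1, hq]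
        linarith
      · refine key a b ha h (-q) ⟨-q, by push_cast; ring⟩ ?_
        have : -(pick B a - pick B b) = (q : ℝ) := by rw [← h1, hq]
        linarith
  -- (ii) fullness
  have hfull : ∀ S : Set ℝ, S ⊆ B \ F → HasBaireProp S → IsMeagre S := by
    intro S hSsub hSBP
    by_contra hSnm
    obtain ⟨c, hc1, hc2, hc3⟩ := exists_good_code hSBP hSnm
    obtain ⟨x, rfl⟩ := codeOf_surjective c
    have hxgood : Good B (codeOf x) :=
      ⟨hc1, hc2, fun z hz => ((hSsub (hc3 hz)).1)⟩
    have hmem : pick B x ∈ S := hc3 (pick_spec B x hxgood).1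
    have hmemF : pick B x ∈ F := ⟨x, hxgood, rfl⟩
    exact (hSsub hmem).2 hmemF
  -- F nonmeager
  have hFnm : ¬ IsMeagre F := by
    intro hFm
    have hBF : HasBaireProp (B \ F) := by
      obtain ⟨U, hUopen, hUmeag⟩ := hBP
      refine ⟨U, hUopen, ?_⟩
      have hsub : symmDiff (B \ F) U ⊆ symmDiff B U ∪ F := by
        intro z hz
        rw [Set.symmDiff_def] at hz ⊢
        rcases hz with ⟨⟨hzB, hzF⟩, hzU⟩ | ⟨hzU, hz⟩
        · exact Or.inl (Or.inl ⟨hzB, hzU⟩)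
        · by_cases hzB : z ∈ B
          · by_cases hzF : z ∈ F
            · exact Or.inr hzF
            · exact absurd ⟨hzB, hzF⟩ hz
          · exact Or.inl (Or.inr ⟨hzU, hzB⟩)
      exact (isMeagre_union hUmeag hFm).mono hsub
    have : IsMeagre (B \ F) := hfull _ (fun z hz => hz) hBF
    have : IsMeagre B := by
      have := isMeagre_union this hFm
      exact this.mono (fun z hz => by
        by_cases h : z ∈ F
        · exact Or.inr h
        · exact Or.inl ⟨hz, h⟩)
    exact hnm this
  exact ⟨F, hFsub, hFnm, hfull, hdist⟩
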